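/- Let h denote the binary entropy function h(q) = −q·log₂(q) − (1−q)·log₂(1−q) (with h(0)=h(1)=0), and define G : [3/4, (2+√2)/4] → ℝ by G(x) = 1 − h(1/2 + (1/2)·√(16x² − 16x + 3)). Then for every x_t ∈ (3/4, (2+√2)/4) and every x ∈ [3/4, (2+√2)/4], G(x) ≥ G(x_t) + G′(x_t)·(x − x_t), where G′(x_t) denotes the derivative of G at x_t. -/

import Mathlib

/-!
The tangent line lies below the graph because `chshEntropyBound` is convex on
`[3/4, (2+√2)/4]`. With `u = √(16x² − 16x + 3)` and `h'(q) = log₂((1 − q)/q)`, its derivative is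
`(8x − 4)/log 2 · (log(1 + u) − log(1 − u))/u`. Both factors are nonnegative and increasing in `x`:
`u` increases with `x`, and `(log(1 + u) − log(1 − u))/u = ∑ 2u^(2k)/(2k + 1)` has nonnegative
coefficients. A function with monotone derivative is convex.
-/

/-- The binary entropy function `h(q) = −q·log₂ q − (1−q)·log₂(1−q)`
(with the conventions `h 0 = h 1 = 0`, which hold automatically since
`Real.logb 2 0 = 0`). -/
noncomputable def binaryEntropy (q : ℝ) : ℝ :=
  -q * Real.logb 2 q - (1 - q) * Real.logb 2 (1 - q)

/-- The single-round entropy bound of the CHSH-based protocol, as a function of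
the CHSH winning probability `x ∈ [3/4, (2+√2)/4]`. -/
noncomputable def chshEntropyBound (x : ℝ) : ℝ :=
  1 - binaryEntropy (1 / 2 + (1 / 2) * Real.sqrt (16 * x ^ 2 - 16 * x + 3))

open Real Set

theorem ConvexOn.add_mul_sub_le_of_hasDerivAt {S : Set ℝ} {f : ℝ → ℝ} {f' x y : ℝ}
    (hf : ConvexOn ℝ S f) (hx : x ∈ S) (hy : y ∈ S) (hf' : HasDerivAt f f' x) :
    f x + f' * (y - x) ≤ f y := by
  rcases lt_trichotomy x y with hxy | rfl | hyx
  · have h := hf.le_slope_of_hasDerivAt hx hy hxy hf'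
    rw [slope_def_field, le_div_iff₀ (sub_pos.2 hxy)] at h
    linarith
  · simp
  · have h := hf.slope_le_of_hasDerivAt hy hx hyx hf'
    rw [slope_def_field, div_le_iff₀ (sub_pos.2 hyx)] at h
    linarith

theorem monotoneOn_log_one_add_sub_log_one_sub_div :
    MonotoneOn (fun u : ℝ => (log (1 + u) - log (1 - u)) / u) (Ioo 0 1) := by
  have hasSum_div {u : ℝ} (hu : u ∈ Ioo (0 : ℝ) 1) :
      HasSum (fun k : ℕ => 2 * (1 / (2 * k + 1)) * u ^ (2 * k))
        ((log (1 + u) - log (1 - u)) / u) := by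
    simpa only [pow_succ, mul_div_assoc, mul_div_cancel_right₀ _ hu.1.ne'] using
      (hasSum_log_sub_log_of_abs_lt_one (abs_lt.2 ⟨by linarith [hu.1], hu.2⟩)).div_const u
  intro u hu v hv huv
  exact hasSum_le (fun k => by gcongr; exact hu.1.le) (hasSum_div hu) (hasSum_div hv)

theorem log_one_add_sub_log_one_sub_div_nonneg {u : ℝ} (hu : u ∈ Ioo (0 : ℝ) 1) :
    0 ≤ (log (1 + u) - log (1 - u)) / u :=
  div_nonneg (sub_nonneg.2 (log_le_log (by linarith [hu.2]) (by linarith [hu.1]))) hu.1.le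

theorem hasDerivAt_binEntropy_one_add_div_two {u : ℝ} (hu : u ∈ Ioo (-1 : ℝ) 1) :
    HasDerivAt (fun t => binEntropy ((1 + t) / 2)) (-(log (1 + u) - log (1 - u)) / 2) u := by
  have h₀ : (1 + u) / 2 ≠ 0 := by linarith [hu.1]
  have h₁ : (1 + u) / 2 ≠ 1 := by linarith [hu.2]
  refine ((hasDerivAt_binEntropy h₀ h₁).comp u
    (((hasDerivAt_id u).const_add 1).div_const 2)).congr_deriv ?_
  rw [show 1 - (1 + u) / 2 = (1 - u) / 2 by ring, log_div (by linarith [hu.2]) two_ne_zero,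
    log_div (by linarith [hu.1]) two_ne_zero]
  ring

theorem sqrt_chsh_mem_Ioo {x : ℝ} (hx : x ∈ Ioo (3 / 4 : ℝ) ((2 + √2) / 4)) :
    √(16 * x ^ 2 - 16 * x + 3) ∈ Ioo 0 1 := by
  have hw : 1 < 4 * x - 2 := by linarith [hx.1]
  have hw' : 4 * x - 2 < √2 := by linarith [hx.2]
  have hw2 : (4 * x - 2) ^ 2 < 2 := by
    simpa [sq_sqrt zero_le_two] using pow_lt_pow_left₀ hw' (by linarith) two_ne_zero
  exact ⟨sqrt_pos.2 (by nlinarith), (sqrt_lt' one_pos).2 (by nlinarith)⟩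

theorem monotoneOn_sqrt_chsh :
    MonotoneOn (fun x : ℝ => √(16 * x ^ 2 - 16 * x + 3)) (Ici (1 / 2)) := by
  intro a ha b hb hab
  apply sqrt_le_sqrt
  nlinarith [mem_Ici.1 ha, mem_Ici.1 hb]

theorem chshEntropyBound_eq_binEntropy :
    chshEntropyBound =
      fun x => 1 - binEntropy ((1 + √(16 * x ^ 2 - 16 * x + 3)) / 2) / log 2 := by
  funext x
  simp only [chshEntropyBound, binaryEntropy, binEntropy, logb, log_inv]
  ring_nf

theorem hasDerivAt_chshEntropyBound {x : ℝ} (hx : x ∈ Ioo (3 / 4 : ℝ) ((2 + √2) / 4)) :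
    HasDerivAt chshEntropyBound
      ((8 * x - 4) / log 2 *
        ((log (1 + √(16 * x ^ 2 - 16 * x + 3)) - log (1 - √(16 * x ^ 2 - 16 * x + 3))) /
          √(16 * x ^ 2 - 16 * x + 3))) x := by
  obtain ⟨hu₀, hu₁⟩ := sqrt_chsh_mem_Ioo hx
  have hpoly : HasDerivAt (fun x : ℝ => 16 * x ^ 2 - 16 * x + 3) (32 * x - 16) x := by
    refine ((((hasDerivAt_pow 2 x).const_mul 16).sub
      ((hasDerivAt_id x).const_mul 16)).add_const 3).congr_deriv ?_
    ring
  have hsqrt := hpoly.sqrt (sqrt_pos.1 hu₀).ne'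
  have hH := (hasDerivAt_binEntropy_one_add_div_two ⟨by linarith, hu₁⟩).comp x hsqrt
  rw [chshEntropyBound_eq_binEntropy]
  refine ((hH.div_const (log 2)).const_sub 1).congr_deriv ?_
  field_simp
  ring

theorem convexOn_chshEntropyBound :
    ConvexOn ℝ (Icc (3 / 4 : ℝ) ((2 + √2) / 4)) chshEntropyBound := by
  refine MonotoneOn.convexOn_of_deriv (convex_Icc _ _) ?_ ?_ ?_
  · rw [chshEntropyBound_eq_binEntropy]
    fun_prop
  · rw [interior_Icc]
    exact fun x hx => (hasDerivAt_chshEntropyBound hx).differentiableAt.differentiableWithinAt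
  · rw [interior_Icc]
    refine MonotoneOn.congr ?_ fun x hx => (hasDerivAt_chshEntropyBound hx).deriv.symm
    have hlinear : MonotoneOn (fun x : ℝ => (8 * x - 4) / log 2) (Ioo (3 / 4) ((2 + √2) / 4)) :=
      fun a _ b _ hab => div_le_div_of_nonneg_right (by linarith) (log_pos one_lt_two).le
    have hratio := monotoneOn_log_one_add_sub_log_one_sub_div.comp
      (monotoneOn_sqrt_chsh.mono fun x hx => mem_Ici.2 (by linarith [hx.1]))
      fun _ => sqrt_chsh_mem_Ioo
    exact hlinear.mul hratio (fun x hx => div_nonneg (by linarith [hx.1]) (log_pos one_lt_two).le)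
      fun x hx => log_one_add_sub_log_one_sub_div_nonneg (sqrt_chsh_mem_Ioo hx)

/-- Tangent-line inequality underlying the construction of the min-tradeoff
function: for every `x_t ∈ (3/4, (2+√2)/4)` and every `x ∈ [3/4, (2+√2)/4]`,
`G(x) ≥ G(x_t) + G′(x_t)·(x − x_t)`. -/
theorem chshEntropyBound_tangent_line_le
    (xt : ℝ) (hxt : xt ∈ Set.Ioo (3 / 4 : ℝ) ((2 + Real.sqrt 2) / 4))
    (x : ℝ) (hx : x ∈ Set.Icc (3 / 4 : ℝ) ((2 + Real.sqrt 2) / 4)) :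
    chshEntropyBound x ≥
      chshEntropyBound xt + deriv chshEntropyBound xt * (x - xt) :=
  convexOn_chshEntropyBound.add_mul_sub_le_of_hasDerivAt (Ioo_subset_Icc_self hxt) hx
    (hasDerivAt_chshEntropyBound hxt).differentiableAt.hasDerivAt
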